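/- If the coordinated system A12(B1, B2) is started from the initial state (free, sleep, sleep), then no reachable state has both B1 and B2 in state 'work'; i.e., the mutual exclusion property (q1 ≠ work ∨ q2 ≠ work) is an invariant of the reachable state space. -/

import Mathlib

/-- A labeled transition system with one initial state. -/
structure LTS (Λ : Type) : Type 1 where
  Q : Type
  init : Q
  tr : Q → Λ → Q → Prop

/-- `R` is a bisimulation between `L1` and `L2` relating the initial states. -/
def IsBisim {Λ : Type} (L1 L2 : LTS Λ) (R : L1.Q → L2.Q → Prop) : Prop :=
  R L1.init L2.init ∧
  ∀ q1 q2, R q1 q2 →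
    (∀ a q1', L1.tr q1 a q1' → ∃ q2', L2.tr q2 a q2' ∧ R q1' q2') ∧
    (∀ a q2', L2.tr q2 a q2' → ∃ q1', L1.tr q1 a q1' ∧ R q1' q2')

/-- Bisimilarity of labeled transition systems. -/
def Bisim {Λ : Type} (L1 L2 : LTS Λ) : Prop := ∃ R, IsBisim L1 L2 R

/-- A port automaton over the node universe `N`
    (also used for (data-agnostic) BIP components). -/
structure PA (N : Type) : Type 1 where
  Q : Type
  init : Q
  nodes : Set N
  tr : Q → Set N → Q → Prop

/-- Interpretation of a port automaton as an LTS over the alphabet `2^N`. -/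
def fa {N : Type} (A : PA N) : LTS (Set N) := ⟨A.Q, A.init, A.tr⟩

/-- Hiding a set `P` of nodes in a port automaton. -/
def PA.hide {N : Type} (P : Set N) (A : PA N) : PA N :=
  ⟨A.Q, A.init, A.nodes \ P, fun q M q' => ∃ M0, A.tr q M0 q' ∧ M = M0 \ P⟩

/-- Product of port automata: synchronization on shared nodes,
    interleaving for transitions disjoint from the other automaton's nodes. -/
def paProd {N : Type} (A1 A2 : PA N) : PA N where
  Q := A1.Q × A2.Q
  init := (A1.init, A2.init)
  nodes := A1.nodes ∪ A2.nodes
  tr := fun q M q' =>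
    (∃ M1 M2, A1.tr q.1 M1 q'.1 ∧ A2.tr q.2 M2 q'.2 ∧
      M1 ∩ A2.nodes = M2 ∩ A1.nodes ∧ M = M1 ∪ M2) ∨
    (A1.tr q.1 M q'.1 ∧ q'.2 = q.2 ∧ M ∩ A2.nodes = ∅) ∨
    (A2.tr q.2 M q'.2 ∧ q'.1 = q.1 ∧ M ∩ A1.nodes = ∅)

/-- The class PA': ∅-labeled transitions exist exactly as self-loops. -/
def PAPrime {N : Type} (A : PA N) : Prop := ∀ q q', A.tr q ∅ q' ↔ q' = q

/-- Standard bisimilarity of port automata. -/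
def PABisim {N : Type} (A1 A2 : PA N) : Prop :=
  ∃ R : A1.Q → A2.Q → Prop, R A1.init A2.init ∧
    ∀ q1 q2, R q1 q2 →
      (∀ M q1', A1.tr q1 M q1' → ∃ q2', A2.tr q2 M q2' ∧ R q1' q2') ∧
      (∀ M q2', A2.tr q2 M q2' → ∃ q1', A1.tr q1 M q1' ∧ R q1' q2')

/-- A BIP architecture: a finite disconnected family of coordinating components,
    an interface `ports` containing all their ports, and an interaction model `γ`. -/
structure Arch (N : Type) : Type 1 where
  ι : Type
  fin : Finite ι
  comp : ι → PA N
  ports : Set N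
  γ : Set (Set N)
  sub : ∀ i, (comp i).nodes ⊆ ports
  disj : ∀ i j, i ≠ j → Disjoint (comp i).nodes (comp j).nodes

/-- The internal ports `P_C` of an architecture. -/
def Arch.PC {N : Type} (A : Arch N) : Set N := ⋃ i, (A.comp i).nodes

/-- Transitions of the application of the architecture `A` to the dummy component
    `D = ({q_D}, q_D, P \ P_C, {(q_D, M, q_D) | ∅ ≠ M ⊆ P \ P_C})`
    (the dummy imposes no constraints and never changes state).
    Rule 1: `M = ∅` and exactly one coordinating component makes an `∅`-move;
    Rule 2: `M ∩ P_A = M ∈ γ` and every component sharing ports with `M`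
    makes the projected move while the others stay put. -/
def appTr {N : Type} (A : Arch N) (q : ∀ i, (A.comp i).Q) (M : Set N)
    (q' : ∀ i, (A.comp i).Q) : Prop :=
  (M = ∅ ∧ ∃ i, (A.comp i).tr (q i) ∅ (q' i) ∧ ∀ j, j ≠ i → q' j = q j) ∨
  (M ⊆ A.ports ∧ M ∈ A.γ ∧ ∀ i,
    (M ∩ (A.comp i).nodes ≠ ∅ → (A.comp i).tr (q i) (M ∩ (A.comp i).nodes) (q' i)) ∧
    (M ∩ (A.comp i).nodes = ∅ → q' i = q i))

/-- Interpretation `g_a` of a BIP architecture: the application to the dummy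
    component (whose unique state is kept as a `Unit` coordinate),
    with all internal ports `P_C` hidden from the labels. -/
def ga {N : Type} (A : Arch N) : LTS (Set N) where
  Q := (∀ i, (A.comp i).Q) × Unit
  init := (fun i => (A.comp i).init, ())
  tr := fun q M' q' => ∃ M, appTr A q.1 M q'.1 ∧ M' = M \ A.PC

/-- The class Arch': coordinating components have ∅-labeled transitions
    only as self-loops. -/
def ArchPrime {N : Type} (A : Arch N) : Prop :=
  ∀ i q q', (A.comp i).tr q ∅ q' → q' = q

/-- Translation of a port automaton into a BIP architecture, with `pr` providing
    the fresh primed duplicate of each port.  The single coordinating component is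
    the automaton itself relabeled over the primed ports, and the interaction model
    is `{M ∪ M' | M ⊆ N}`. -/
def BIPa {N : Type} (A : PA N) (pr : N → N) : Arch N where
  ι := Unit
  fin := inferInstance
  comp := fun _ =>
    ⟨A.Q, A.init, pr '' A.nodes, fun q M' q' => ∃ M, M' = pr '' M ∧ A.tr q M q'⟩
  ports := A.nodes ∪ pr '' A.nodes
  γ := {M' | ∃ M, M ⊆ A.nodes ∧ M' = M ∪ pr '' M}
  sub := fun _ => Set.subset_union_right
  disj := fun i j h => absurd (Subsingleton.elim i j) h

/-- The single-state port automaton encoding of an interaction model `γ` over ports `P`. -/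
def Agamma {N : Type} (P : Set N) (γ : Set (Set N)) : PA N :=
  ⟨Unit, (), P, fun _ M _ => M ∈ γ⟩

/-- n-ary product of a family of port automata (the generalization of `paProd`):
    a global step labeled `M` projects to a step or an idling of each member. -/
def famProd {N ι : Type} (f : ι → PA N) : PA N where
  Q := ∀ i, (f i).Q
  init := fun i => (f i).init
  nodes := ⋃ i, (f i).nodes
  tr := fun q M q' => M ⊆ (⋃ i, (f i).nodes) ∧ ∀ i,
    ((f i).tr (q i) (M ∩ (f i).nodes) (q' i) ∨ (M ∩ (f i).nodes = ∅ ∧ q' i = q i))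

/-- Translation of a BIP architecture into a port automaton:
    `Reo_a(A) = ∃P_C (C̃1 ⋈ ⋯ ⋈ C̃n ⋈ A_γ)`. -/
def ReoA {N : Type} (A : Arch N) : PA N :=
  PA.hide A.PC (famProd (fun o : Option A.ι =>
    match o with
    | none => Agamma A.ports A.γ
    | some i => A.comp i))

/-- Composition `A1 ⊕ A2` of BIP architectures. -/
def archComp {N : Type} (A1 A2 : Arch N)
    (h1 : Disjoint A1.PC A2.ports) (h2 : Disjoint A2.PC A1.ports) : Arch N where
  ι := A1.ι ⊕ A2.ι
  fin := by have := A1.fin; have := A2.fin; infer_instance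
  comp := Sum.elim A1.comp A2.comp
  ports := A1.ports ∪ A2.ports
  γ := {M | M ⊆ A1.ports ∪ A2.ports ∧ M ∩ A1.ports ∈ A1.γ ∧ M ∩ A2.ports ∈ A2.γ}
  sub := by
    rintro (i | i)
    · exact (A1.sub i).trans Set.subset_union_left
    · exact (A2.sub i).trans Set.subset_union_right
  disj := by
    rintro (i | i) (j | j) hij
    · exact A1.disj i j (by rintro rfl; exact hij rfl)
    · exact h1.mono (Set.subset_iUnion (fun k => (A1.comp k).nodes) i) (A2.sub j)
    · exact h2.mono (Set.subset_iUnion (fun k => (A2.comp k).nodes) i) (A1.sub j)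
    · exact A2.disj i j (by rintro rfl; exact hij rfl)

/-- The six ports of the mutual exclusion example. -/
inductive MPort | b1 | b2 | f1 | f2 | b12 | f12
deriving DecidableEq

/-- States of the components `B1`, `B2`. -/
inductive BSt | sleep | work
deriving DecidableEq

/-- States of the coordinator `C12`. -/
inductive CSt | free | taken
deriving DecidableEq

open MPort BSt CSt

def trB1 : BSt → Set MPort → BSt → Prop := fun q M q' =>
  (q = sleep ∧ M = {b1} ∧ q' = work) ∨ (q = work ∧ M = {f1} ∧ q' = sleep)

def trB2 : BSt → Set MPort → BSt → Prop := fun q M q' =>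
  (q = sleep ∧ M = {b2} ∧ q' = work) ∨ (q = work ∧ M = {f2} ∧ q' = sleep)

def trC : CSt → Set MPort → CSt → Prop := fun q M q' =>
  (q = free ∧ M = {b12} ∧ q' = taken) ∨ (q = taken ∧ M = {f12} ∧ q' = free)

def gamma12 : Set (Set MPort) :=
  {∅, {b1, b12}, {b2, b12}, {f1, f12}, {f2, f12}}

def PB1 : Set MPort := {b1, f1}
def PB2 : Set MPort := {b2, f2}
def PCo : Set MPort := {b12, f12}

/-- Global states of `A12(B1, B2)`: coordinator state and the two component states. -/
abbrev MState := CSt × BSt × BSt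

/-- The transition relation of the application `A12(B1, B2)`:
    rule 1 (`M = ∅`, one component makes an `∅`-move — none exist here),
    or rule 2 (`M ∩ P12 = M ∈ γ12`, every component with ports in `M` makes the
    projected move, the others stay). `P12` covers all ports, so every nonempty
    interaction must lie in `γ12`. -/
def mstep : MState → Set MPort → MState → Prop := fun s M s' =>
  (M = ∅ ∧
    ((trC s.1 ∅ s'.1 ∧ s'.2.1 = s.2.1 ∧ s'.2.2 = s.2.2) ∨
     (trB1 s.2.1 ∅ s'.2.1 ∧ s'.1 = s.1 ∧ s'.2.2 = s.2.2) ∨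
     (trB2 s.2.2 ∅ s'.2.2 ∧ s'.1 = s.1 ∧ s'.2.1 = s.2.1))) ∨
  (M ∈ gamma12 ∧
    (M ∩ PCo ≠ ∅ → trC s.1 (M ∩ PCo) s'.1) ∧ (M ∩ PCo = ∅ → s'.1 = s.1) ∧
    (M ∩ PB1 ≠ ∅ → trB1 s.2.1 (M ∩ PB1) s'.2.1) ∧ (M ∩ PB1 = ∅ → s'.2.1 = s.2.1) ∧
    (M ∩ PB2 ≠ ∅ → trB2 s.2.2 (M ∩ PB2) s'.2.2) ∧ (M ∩ PB2 = ∅ → s'.2.2 = s.2.2))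

/-! Every nonempty interaction of `γ12` synchronizes the coordinator with exactly one
component, and no component has an `∅`-move, so `C12` behaves as a token: it is `taken`
exactly while one component works. Hence the reachable states are the three states of
`mutexStates`, none of which has both components working. -/

lemma mstep_cases {s s' : MState} {M : Set MPort} (h : mstep s M s') :
    s' = s ∨
    (s.1 = free ∧ s.2.1 = sleep ∧ s' = (taken, work, s.2.2)) ∨
    (s.1 = free ∧ s.2.2 = sleep ∧ s' = (taken, s.2.1, work)) ∨
    (s.1 = taken ∧ s.2.1 = work ∧ s' = (free, sleep, s.2.2)) ∨
    (s.1 = taken ∧ s.2.2 = work ∧ s' = (free, s.2.1, sleep)) := by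
  obtain ⟨c, p1, p2⟩ := s
  obtain ⟨c', p1', p2'⟩ := s'
  rcases h with ⟨-, ⟨hC, -⟩ | ⟨hB1, -⟩ | ⟨hB2, -⟩⟩ | ⟨hγ, hC, hC0, hB1, hB10, hB2, hB20⟩
  · simp [trC] at hC
  · simp [trB1] at hB1
  · simp [trB2] at hB2
  simp only [gamma12, Set.mem_insert_iff, Set.mem_singleton_iff] at hγ
  rcases hγ with rfl | rfl | rfl | rfl | rfl <;>
    simp_all [PCo, PB1, PB2, Set.insert_inter_of_mem, Set.insert_inter_of_notMem, trC, trB1, trB2]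

def mutexStates : Set MState :=
  {(free, sleep, sleep), (taken, work, sleep), (taken, sleep, work)}

lemma mstep_mem_mutexStates {s s' : MState} {M : Set MPort} (hs : s ∈ mutexStates)
    (h : mstep s M s') : s' ∈ mutexStates := by
  simp only [mutexStates, Set.mem_insert_iff, Set.mem_singleton_iff] at hs ⊢
  rcases hs with rfl | rfl | rfl <;> rcases mstep_cases h with h | h | h | h | h <;> simp_all

/-- from the initial state `(free, sleep, sleep)`, no reachable
    state of `A12(B1, B2)` has both `B1` and `B2` in state `work`: mutual
    exclusion is an invariant of the reachable state space. -/
theorem mutex_invariant :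
    ∀ s : MState,
      Relation.ReflTransGen (fun a b => ∃ M, mstep a M b) (free, sleep, sleep) s →
      ¬(s.2.1 = work ∧ s.2.2 = work) := by
  intro s hreach
  have hs : s ∈ mutexStates := by
    induction hreach with
    | refl => simp [mutexStates]
    | tail _ hstep ih =>
      obtain ⟨M, hM⟩ := hstep
      exact mstep_mem_mutexStates ih hM
  simp only [mutexStates, Set.mem_insert_iff, Set.mem_singleton_iff] at hs
  rcases hs with rfl | rfl | rfl <;> simp
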